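/- arXiv:math/0405153 — 2 statements merged into one kernel-verified Lean document; each statement's English description precedes it below -/
import Mathlib

section
/- Let M be a real symplectic 2n×2n matrix with block decomposition M = [[A, B], [C, D]] into n×n blocks, and assume B is invertible. Then the n×n matrix 2X = (Iₙ − D)B⁻¹(Iₙ − A) − C is symmetric, i.e. Xᵀ = X. -/
open Matrix

/-- The standard complex structure `J` on `ℝ^{2n}` in block form. -/
noncomputable def stdJ (n : ℕ) : Matrix (Fin n ⊕ Fin n) (Fin n ⊕ Fin n) ℝ :=
  Matrix.fromBlocks 0 (-1) 1 0

/-- Let `M = [[A,B],[C,D]]` be a real symplectic `2n × 2n` matrix with `B` invertible.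
Then the matrix `2X = (1 - D) * B⁻¹ * (1 - A) - C` is symmetric, i.e. `Xᵀ = X`. -/
theorem twoX_symmetric {n : ℕ} (A B C D : Matrix (Fin n) (Fin n) ℝ)
    (hB : IsUnit B.det)
    (hM : (Matrix.fromBlocks A B C D)ᵀ * stdJ n * Matrix.fromBlocks A B C D = stdJ n)
    (X : Matrix (Fin n) (Fin n) ℝ)
    (hX : (2 : ℝ) • X = (1 - D) * B⁻¹ * (1 - A) - C) :
    Xᵀ = X := by
  set N := Matrix.fromBlocks A B C D with hN
  -- `M J Mᵀ = J` from `Mᵀ J M = J`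
  have hKK : stdJ n * stdJ n = -1 := by
    simp [stdJ, Matrix.fromBlocks_multiply, ← Matrix.fromBlocks_one,
      Matrix.fromBlocks_neg, Matrix.fromBlocks_inj]
  have hleft : ((-(stdJ n)) * Nᵀ * stdJ n) * N = 1 := by
    calc ((-(stdJ n)) * Nᵀ * stdJ n) * N = (-(stdJ n)) * (Nᵀ * stdJ n * N) := by
          simp [Matrix.mul_assoc]
      _ = (-(stdJ n)) * stdJ n := by rw [hM]
      _ = 1 := by simp [hKK]
  have hright : N * ((-(stdJ n)) * Nᵀ * stdJ n) = 1 := mul_eq_one_comm.mp hleft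
  have hM2 : N * stdJ n * Nᵀ = stdJ n := by
    have h1 : (N * ((-(stdJ n)) * Nᵀ * stdJ n)) * (-(stdJ n)) = 1 * (-(stdJ n)) := by
      rw [hright]
    have h2 : stdJ n * -stdJ n = 1 := by simp [hKK]
    calc N * stdJ n * Nᵀ = -(N * -stdJ n * Nᵀ) := by noncomm_ring
      _ = -((N * ((-(stdJ n)) * Nᵀ * stdJ n)) * (-(stdJ n))) := by
          simp only [Matrix.mul_assoc, h2, Matrix.mul_one]
      _ = -(1 * (-(stdJ n))) := by rw [h1]
      _ = stdJ n := by simp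
  -- extract block identities
  have hblk : Matrix.fromBlocks (Cᵀ * A + -(Aᵀ * C)) (Cᵀ * B + -(Aᵀ * D))
      (Dᵀ * A + -(Bᵀ * C)) (Dᵀ * B + -(Bᵀ * D)) = Matrix.fromBlocks 0 (-1) 1 0 := by
    have := hM
    rw [hN] at this
    simpa [stdJ, Matrix.fromBlocks_transpose, Matrix.fromBlocks_multiply] using this
  have hblk2 : Matrix.fromBlocks (B * Aᵀ + -(A * Bᵀ)) (B * Cᵀ + -(A * Dᵀ))
      (D * Aᵀ + -(C * Bᵀ)) (D * Cᵀ + -(C * Dᵀ)) = Matrix.fromBlocks 0 (-1) 1 0 := by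
    have := hM2
    rw [hN] at this
    simpa [stdJ, Matrix.fromBlocks_transpose, Matrix.fromBlocks_multiply] using this
  rw [Matrix.fromBlocks_inj] at hblk hblk2
  obtain ⟨-, -, h21, h22⟩ := hblk
  obtain ⟨g11, -, -, -⟩ := hblk2
  -- h21 : Bᵀ * (-C) + Dᵀ * A = 1, h22 : Bᵀ * (-D) + Dᵀ * B = 0
  -- g11 : A * (-Bᵀ) + B * Aᵀ = 0
  have hBD : Dᵀ * B = Bᵀ * D := by
    linear_combination (norm := noncomm_ring) h22
  have hAB : B * Aᵀ = A * Bᵀ := by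
    linear_combination (norm := noncomm_ring) g11
  have hC : Bᵀ * C = Dᵀ * A - 1 := by
    linear_combination (norm := noncomm_ring) -h21
  have hBi : B * B⁻¹ = 1 := Matrix.mul_nonsing_inv B hB
  have hBi' : B⁻¹ * B = 1 := Matrix.nonsing_inv_mul B hB
  have hBti : Bᵀ⁻¹ * Bᵀ = 1 := by
    rw [← Matrix.transpose_nonsing_inv, ← Matrix.transpose_mul, hBi]
    simp
  have hBti' : Bᵀ * Bᵀ⁻¹ = 1 := by
    rw [← Matrix.transpose_nonsing_inv, ← Matrix.transpose_mul, hBi']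
    simp
  -- symmetry of B⁻¹ * A
  have s1 : (B⁻¹ * A)ᵀ = B⁻¹ * A := by
    have : Aᵀ * Bᵀ⁻¹ = B⁻¹ * A := by
      calc Aᵀ * Bᵀ⁻¹ = B⁻¹ * (B * Aᵀ) * Bᵀ⁻¹ := by
            rw [← Matrix.mul_assoc, hBi', Matrix.one_mul]
        _ = B⁻¹ * (A * Bᵀ) * Bᵀ⁻¹ := by rw [hAB]
        _ = B⁻¹ * A * (Bᵀ * Bᵀ⁻¹) := by simp [Matrix.mul_assoc]
        _ = B⁻¹ * A := by rw [hBti', Matrix.mul_one]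
    rw [Matrix.transpose_mul, Matrix.transpose_nonsing_inv, this]
  -- symmetry of D * B⁻¹
  have s2 : (D * B⁻¹)ᵀ = D * B⁻¹ := by
    have : Bᵀ⁻¹ * Dᵀ = D * B⁻¹ := by
      calc Bᵀ⁻¹ * Dᵀ = Bᵀ⁻¹ * (Dᵀ * B) * B⁻¹ := by
            simp [Matrix.mul_assoc, hBi]
        _ = Bᵀ⁻¹ * (Bᵀ * D) * B⁻¹ := by rw [hBD]
        _ = (Bᵀ⁻¹ * Bᵀ) * (D * B⁻¹) := by simp [Matrix.mul_assoc]
        _ = D * B⁻¹ := by rw [hBti, Matrix.one_mul]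
    rw [Matrix.transpose_mul, Matrix.transpose_nonsing_inv, this]
  -- C in terms of the rest
  have hC2 : C = Bᵀ⁻¹ * Dᵀ * A - Bᵀ⁻¹ := by
    have := congrArg (fun M => Bᵀ⁻¹ * M) hC
    simp only [← Matrix.mul_assoc, hBti, Matrix.one_mul] at this
    rw [this]
    noncomm_ring
  have hDC : D * B⁻¹ * A - C = Bᵀ⁻¹ := by
    have hDB : Bᵀ⁻¹ * Dᵀ = D * B⁻¹ := by
      have := s2
      rw [Matrix.transpose_mul, Matrix.transpose_nonsing_inv] at this
      exact this
    rw [hC2, ← hDB]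
    noncomm_ring
  -- compute 2X
  have h2X : (2 : ℝ) • X = B⁻¹ - B⁻¹ * A - D * B⁻¹ + Bᵀ⁻¹ := by
    rw [hX, ← hDC]
    noncomm_ring
  have h2XT : ((2 : ℝ) • X)ᵀ = (2 : ℝ) • X := by
    rw [h2X]
    simp only [Matrix.transpose_add, Matrix.transpose_sub, s1, s2,
      Matrix.transpose_nonsing_inv, Matrix.transpose_transpose]
    abel
  rw [Matrix.transpose_smul] at h2XT
  have := congrArg (fun M => ((2 : ℝ)⁻¹ : ℝ) • M) h2XT
  simpa [smul_smul] using this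
end

section
/- Let X be a real symmetric n×n matrix with eigenvalues λ₁, …, λₙ counted with multiplicity, and let Y be the real 3n×3n block matrix Y = [[0ₙ, −Iₙ, X], [−Iₙ, 0ₙ, Iₙ], [Xᵀ, Iₙ, 0ₙ]]. Then the characteristic polynomial of Y factors as det(t·I_{3n} − Y) = ∏_{j=1}^{n} (t − λⱼ)(t² + λⱼ t − 2). -/
open Matrix Finset

/-- The `3n × 3n` block matrix `Y = [[0, -1, X], [-1, 0, 1], [Xᵀ, 1, 0]]`. -/
noncomputable def blockY {n : ℕ} (X : Matrix (Fin n) (Fin n) ℝ) :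
    Matrix ((Fin n ⊕ Fin n) ⊕ Fin n) ((Fin n ⊕ Fin n) ⊕ Fin n) ℝ :=
  Matrix.fromBlocks (Matrix.fromBlocks 0 (-1) (-1) 0)
    (Matrix.fromRows X 1) (Matrix.fromCols Xᵀ 1) 0

def tripleEquiv (n : ℕ) : (Fin 3 × Fin n) ≃ ((Fin n ⊕ Fin n) ⊕ Fin n) where
  toFun p := ![fun i => Sum.inl (Sum.inl i), fun i => Sum.inl (Sum.inr i),
    fun i => Sum.inr i] p.1 p.2
  invFun x := match x with
    | .inl (.inl i) => (0, i)
    | .inl (.inr i) => (1, i)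
    | .inr i => (2, i)
  left_inv p := by rcases p with ⟨k, i⟩; fin_cases k <;> rfl
  right_inv x := by rcases x with ((i | i) | i) <;> rfl

lemma det_blockY_diagonal {n : ℕ} (d : Fin n → ℝ) (t : ℝ) :
    (t • (1 : Matrix ((Fin n ⊕ Fin n) ⊕ Fin n) ((Fin n ⊕ Fin n) ⊕ Fin n) ℝ)
        - blockY (Matrix.diagonal d)).det
      = ∏ j : Fin n, (t - d j) * (t ^ 2 + d j * t - 2) := by
  have hM : (t • (1 : Matrix ((Fin n ⊕ Fin n) ⊕ Fin n) ((Fin n ⊕ Fin n) ⊕ Fin n) ℝ)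
        - blockY (Matrix.diagonal d))
      = (Matrix.blockDiagonal fun j : Fin n =>
          !![t, 1, -(d j); 1, t, -1; -(d j), -1, t]).submatrix
          (tripleEquiv n).symm (tripleEquiv n).symm := by
    ext x y
    rcases x with ((i | i) | i) <;> rcases y with ((j | j) | j) <;>
      simp [blockY, tripleEquiv, blockDiagonal_apply, Matrix.one_apply, Matrix.diagonal,
        Matrix.fromBlocks, Matrix.fromRows_apply_inl, Matrix.fromRows_apply_inr, Matrix.fromCols, Matrix.transpose_apply] <;>
      split_ifs <;> simp_all
  rw [hM, Matrix.det_submatrix_equiv_self, Matrix.det_blockDiagonal]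
  refine Finset.prod_congr rfl fun j _ => ?_
  rw [Matrix.det_fin_three]
  simp
  ring

/-- Let `X` be a real symmetric `n × n` matrix with eigenvalues `λ₁, …, λₙ` (counted with
multiplicity) and `Y = [[0, -1, X], [-1, 0, 1], [Xᵀ, 1, 0]]`.  Then the characteristic
polynomial of `Y` factors as `det (t·I - Y) = ∏ⱼ (t - λⱼ) * (t² + λⱼ t - 2)`. -/
theorem charpoly_blockY {n : ℕ} (X : Matrix (Fin n) (Fin n) ℝ) (hX : X.IsHermitian) :
    ∀ t : ℝ,
      (t • (1 : Matrix ((Fin n ⊕ Fin n) ⊕ Fin n) ((Fin n ⊕ Fin n) ⊕ Fin n) ℝ)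
          - blockY X).det
        = ∏ j : Fin n,
            (t - hX.eigenvalues j) * (t ^ 2 + hX.eigenvalues j * t - 2) := by
  intro t
  set d := hX.eigenvalues with hd
  set U : Matrix (Fin n) (Fin n) ℝ := (hX.eigenvectorUnitary : Matrix (Fin n) (Fin n) ℝ)
    with hUdef
  have hU1 : U * star U = 1 := (Matrix.mem_unitaryGroup_iff).mp hX.eigenvectorUnitary.2
  have hU2 : star U * U = 1 := (Matrix.mem_unitaryGroup_iff').mp hX.eigenvectorUnitary.2
  have hsU : star U = Uᵀ := by ext i j; simp [Matrix.conjTranspose_apply]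
  have hU1' : U * Uᵀ = 1 := by rw [← hsU]; exact hU1
  have hU2' : Uᵀ * U = 1 := by rw [← hsU]; exact hU2
  have hXeq : X = U * Matrix.diagonal d * Uᵀ := by
    rw [← hsU]
    have := hX.spectral_theorem
    simpa [Function.comp] using this
  have hXT : Xᵀ = X := by
    conv_lhs => rw [← hX.eq]
    ext i j
    simp [Matrix.conjTranspose_apply]
  set P : Matrix ((Fin n ⊕ Fin n) ⊕ Fin n) ((Fin n ⊕ Fin n) ⊕ Fin n) ℝ :=
    Matrix.fromBlocks (Matrix.fromBlocks U 0 0 U) 0 0 U with hPdef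
  have hPP : P * Pᴴ = 1 := by
    simp [hPdef, Matrix.fromBlocks_conjTranspose, Matrix.fromBlocks_multiply, hU1', hsU,
      Matrix.fromBlocks_transpose, ← Matrix.fromBlocks_one]
  have hPP' : Pᴴ * P = 1 := by
    simp [hPdef, Matrix.fromBlocks_conjTranspose, Matrix.fromBlocks_multiply, hU2', hsU,
      Matrix.fromBlocks_transpose, ← Matrix.fromBlocks_one]
  have hDT : (Matrix.diagonal d)ᵀ = Matrix.diagonal d := Matrix.diagonal_transpose d
  have key : t • (1 : Matrix ((Fin n ⊕ Fin n) ⊕ Fin n) ((Fin n ⊕ Fin n) ⊕ Fin n) ℝ)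
      - blockY X
      = P * (t • 1 - blockY (Matrix.diagonal d)) * Pᴴ := by
    rw [Matrix.mul_sub, Matrix.sub_mul]
    congr 1
    · rw [Matrix.mul_smul, Matrix.mul_one, Matrix.smul_mul, hPP]
    · rw [hPdef, blockY, blockY]
      simp only [Matrix.fromBlocks_conjTranspose, Matrix.fromBlocks_multiply,
        Matrix.fromBlocks_mul_fromRows, Matrix.fromCols_mul_fromBlocks,
        Matrix.mul_fromCols, Matrix.fromRows_mul, Matrix.conjTranspose_zero,
        Matrix.mul_zero, Matrix.zero_mul, Matrix.mul_one, Matrix.one_mul,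
        Matrix.mul_neg, Matrix.neg_mul, add_zero, zero_add, Matrix.mul_one]
      rw [hXT, hXeq]
      have hUH : Uᴴ = Uᵀ := hsU
      rw [hUH, hDT, hU1', neg_zero]
  rw [key, Matrix.det_mul, Matrix.det_mul, mul_comm, ← mul_assoc, ← Matrix.det_mul, hPP',
    Matrix.det_one, one_mul, det_blockY_diagonal]
end
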